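/- Let B be a resonant band of A and set δ := ∏_{H_i ∈ Sep(U_1(B),U_2(B))} r_i. Then δ = 1 or δ = −1, for every chamber C ⊆ B one has Δ(U_1(B), C) = −δ·Δ(U_2(B), C), and consequently ∇_1(B) = −δ·∇_2(B); in particular ∇_2(B) = ±∇_1(B). -/

import Mathlib

/-!
For a chamber `C` of the band let `Pᵢ = ∏_{k ∈ Sep(Uᵢ, C)} r k`, so `Δ(Uᵢ, C) = Pᵢ - Pᵢ⁻¹`.
Resonance says `δ = δ⁻¹`, i.e. `δ = ±1`, and everything follows from `δ = P₁ P₂`, i.e. from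
`Sep(U₁, U₂)` being the disjoint union of `Sep(U₁, C)` and `Sep(U₂, C)`: then
`P₁ - P₁⁻¹ = -δ (P₂ - P₂⁻¹)` because `δ² = 1`.

A line parallel to the band misses it, so it separates none of `U₁, U₂, C`. A transversal line
separates the two ends: `α i` is bounded on the band, so far out along the band a transversal
form has, up to a fixed sign, the sign of the coordinate along the band. If both (unbounded)
ends were on the same side, they would reach into the same far half-band, which is convex and
misses every line, forcing `U₁ = U₂`.
-/

open scoped Classical

noncomputable section

abbrev Pt : Type := ℝ × ℝ

/-- An affine-linear functional `a*x + b*y + c` on `ℝ²` with nonzero linear part. -/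
structure AffForm : Type where
  a : ℝ
  b : ℝ
  c : ℝ
  nondeg : a ≠ 0 ∨ b ≠ 0

namespace AffForm

def eval (f : AffForm) (p : Pt) : ℝ := f.a * p.1 + f.b * p.2 + f.c

def line (f : AffForm) : Set Pt := {p | f.eval p = 0}

def Parallel (f g : AffForm) : Prop := f.a * g.b = f.b * g.a

end AffForm

variable {n : ℕ}

/-- An arrangement: at least two distinct affine lines, not all parallel. -/
def IsArrangement (α : Fin n → AffForm) : Prop :=
  2 ≤ n ∧ (∀ i j : Fin n, i ≠ j → (α i).line ≠ (α j).line) ∧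
    ∃ i j : Fin n, ¬ (α i).Parallel (α j)

def complement (α : Fin n → AffForm) : Set Pt := {p | ∀ i, (α i).eval p ≠ 0}

/-- A chamber: a connected component of the complement of the union of the lines. -/
def IsChamber (α : Fin n → AffForm) (C : Set Pt) : Prop :=
  ∃ p ∈ complement α, C = connectedComponentIn (complement α) p

/-- `Sep(C, C')`: the set of indices `i` such that `α i` is positive on one of `C, C'`
and negative on the other. -/
def SepSet (α : Fin n → AffForm) (C C' : Set Pt) : Finset (Fin n) :=
  Finset.univ.filter fun i =>
    ((∀ p ∈ C, 0 < (α i).eval p) ∧ (∀ p ∈ C', (α i).eval p < 0)) ∨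
    ((∀ p ∈ C, (α i).eval p < 0) ∧ (∀ p ∈ C', 0 < (α i).eval p))

/-- `Δ(C, C') = ∏_{i ∈ Sep(C,C')} r i − ∏_{i ∈ Sep(C,C')} (r i)⁻¹`. -/
def Delta (α : Fin n → AffForm) (r : Fin n → ℂ) (C C' : Set Pt) : ℂ :=
  (∏ i ∈ SepSet α C C', r i) - ∏ i ∈ SepSet α C C', (r i)⁻¹

/-- The open strip between two parallel lines `f.line` and `g.line`. -/
def Strip (f g : AffForm) : Set Pt :=
  {p | ∀ q ∈ g.line,
    (0 < f.eval p ∧ f.eval p < f.eval q) ∨ (f.eval q < f.eval p ∧ f.eval p < 0)}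

/-- A band: the open strip between two parallel lines of the arrangement containing no
other line of the arrangement parallel to them. -/
def IsBand (α : Fin n → AffForm) (B : Set Pt) : Prop :=
  ∃ i j : Fin n, i ≠ j ∧ (α i).Parallel (α j) ∧ B = Strip (α i) (α j) ∧
    ∀ k : Fin n, (α k).Parallel (α i) → (α k).line ∩ B = ∅

/-- The data of a band `B` bounded by the parallel lines `H i` and `H j`, together with its
two unbounded chambers `U1` (= `U_1(B)`) and `U2` (= `U_2(B)`). -/
def BandData (α : Fin n → AffForm) (i j : Fin n) (B U1 U2 : Set Pt) : Prop :=
  i ≠ j ∧ (α i).Parallel (α j) ∧ B = Strip (α i) (α j) ∧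
  (∀ k : Fin n, (α k).Parallel (α i) → (α k).line ∩ B = ∅) ∧
  IsChamber α U1 ∧ IsChamber α U2 ∧ U1 ⊆ B ∧ U2 ⊆ B ∧
  ¬ Bornology.IsBounded U1 ∧ ¬ Bornology.IsBounded U2 ∧ U1 ≠ U2

/-- `U1, U2` assign to each band its two unbounded chambers (one at each end). -/
def GoodLabel (α : Fin n → AffForm) (U1 U2 : Set Pt → Set Pt) : Prop :=
  ∀ B : Set Pt, IsBand α B →
    IsChamber α (U1 B) ∧ IsChamber α (U2 B) ∧ U1 B ⊆ B ∧ U2 B ⊆ B ∧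
    ¬ Bornology.IsBounded (U1 B) ∧ ¬ Bornology.IsBounded (U2 B) ∧ U1 B ≠ U2 B

/-- The standing wave `∇(B) = Σ_{C ⊆ B} Δ(U, C)·[C]` (relative to the unbounded
chamber `U` of `B`), an element of `ℂ[ch(A)]`. -/
def wave (α : Fin n → AffForm) (chambers : Finset (Set Pt)) (r : Fin n → ℂ)
    (U B : Set Pt) : Set Pt →₀ ℂ :=
  ∑ C ∈ chambers.filter (fun C => C ⊆ B), Finsupp.single C (Delta α r U C)

/-- The set `RB(A)` of resonant bands (a band `B` is resonant if `Δ(U_1(B), U_2(B)) = 0`). -/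
abbrev RBt (α : Fin n → AffForm) (r : Fin n → ℂ) (U1 U2 : Set Pt → Set Pt) : Type :=
  {B : Set Pt // IsBand α B ∧ Delta α r (U1 B) (U2 B) = 0}

/-- The linear map `∇ : ℂ[RB(A)] → ℂ[ch(A)]` extending `B ↦ ∇(B)`. -/
def nabla (α : Fin n → AffForm) (chambers : Finset (Set Pt)) (r : Fin n → ℂ)
    (U1 U2 : Set Pt → Set Pt) :
    (RBt α r U1 U2 →₀ ℂ) →ₗ[ℂ] (Set Pt →₀ ℂ) :=
  Finsupp.linearCombination ℂ fun B : RBt α r U1 U2 => wave α chambers r (U1 B.1) B.1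

namespace AffForm

lemma sq_add_sq_pos (f : AffForm) : 0 < f.a ^ 2 + f.b ^ 2 := by
  rcases f.nondeg with h | h <;> positivity

lemma continuous_eval (f : AffForm) : Continuous f.eval := by
  unfold eval; fun_prop

lemma line_nonempty (f : AffForm) : f.line.Nonempty := by
  rcases f.nondeg with h | h
  · exact ⟨(-f.c / f.a, 0), by simp only [line, eval, Set.mem_ofPred_eq]; field_simp; ring⟩
  · exact ⟨(0, -f.c / f.b), by simp only [line, eval, Set.mem_ofPred_eq]; field_simp; ring⟩

def toAffineMap (f : AffForm) : Pt →ᵃ[ℝ] ℝ where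
  toFun := f.eval
  linear := f.a • LinearMap.fst ℝ ℝ ℝ + f.b • LinearMap.snd ℝ ℝ ℝ
  map_vadd' p v := by
    simp only [eval, vadd_eq_add, Prod.fst_add, Prod.snd_add, LinearMap.add_apply,
      LinearMap.smul_apply, LinearMap.fst_apply, LinearMap.snd_apply, smul_eq_mul]
    ring

lemma convex_strip (f g : AffForm) : Convex ℝ (Strip f g) := by
  have hJ : ∀ m : ℝ, Convex ℝ (Set.Ioo 0 m ∪ Set.Ioo m 0) := fun m => by
    rcases le_total m 0 with h | h
    · rw [Set.Ioo_eq_empty h.not_gt, Set.empty_union]; exact convex_Ioo m 0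
    · rw [Set.Ioo_eq_empty h.not_gt, Set.union_empty]; exact convex_Ioo 0 m
  have hS : Strip f g =
      ⋂ q ∈ g.line, f.toAffineMap ⁻¹' (Set.Ioo 0 (f.eval q) ∪ Set.Ioo (f.eval q) 0) := by
    ext p; simp [Strip, toAffineMap]
  rw [hS]
  exact convex_iInter₂ fun q _ => (hJ _).affine_preimage f.toAffineMap

lemma exists_abs_eval_le_of_mem_strip (f g : AffForm) :
    ∃ M : ℝ, ∀ p ∈ Strip f g, |f.eval p| ≤ M := by
  obtain ⟨q, hq⟩ := g.line_nonempty
  refine ⟨|f.eval q|, fun p hp => ?_⟩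
  rcases hp q hq with ⟨h₀, h₁⟩ | ⟨h₀, h₁⟩
  · rw [abs_of_pos h₀]; exact h₁.le.trans (le_abs_self _)
  · rw [abs_of_neg h₁]; linarith [neg_abs_le (f.eval q)]

/-- The coordinate along the direction of `f.line`; together with `f.eval` it forms an affine
coordinate system on `ℝ²`. -/
def along (f : AffForm) (p : Pt) : ℝ := f.b * p.1 - f.a * p.2

lemma convex_halfPlane_along (f : AffForm) (σ T : ℝ) : Convex ℝ {p : Pt | T < σ * f.along p} :=
  convex_halfSpace_gt ⟨fun x y => by simp only [along, Prod.fst_add, Prod.snd_add]; ring,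
    fun c x => by simp only [along, Prod.smul_fst, Prod.smul_snd, smul_eq_mul]; ring⟩ T

def cross (f g : AffForm) : ℝ := g.a * f.b - g.b * f.a

lemma cross_ne_zero {f g : AffForm} (h : ¬ g.Parallel f) : f.cross g ≠ 0 :=
  sub_ne_zero.mpr h

lemma sq_add_sq_mul_eval (f g : AffForm) (p : Pt) :
    (f.a ^ 2 + f.b ^ 2) * g.eval p = f.cross g * f.along p +
      ((g.a * f.a + g.b * f.b) * (f.eval p - f.c) + (f.a ^ 2 + f.b ^ 2) * g.c) := by
  simp only [eval, cross, along]; ring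

lemma eventually_pos_cross_mul_along_mul_eval {f g : AffForm} (hfg : ¬ g.Parallel f)
    {S : Set Pt} {M : ℝ} (hM : ∀ p ∈ S, |f.eval p| ≤ M) :
    ∀ᶠ T in Filter.atTop, ∀ p ∈ S, T < |f.along p| → 0 < f.cross g * f.along p * g.eval p := by
  set K := |g.a * f.a + g.b * f.b| * (M + |f.c|) + (f.a ^ 2 + f.b ^ 2) * |g.c|
  have hcr := abs_pos.mpr (cross_ne_zero hfg)
  filter_upwards [Filter.eventually_ge_atTop (K / |f.cross g|)] with T hT p hp hTp
  have hE : |(g.a * f.a + g.b * f.b) * (f.eval p - f.c) + (f.a ^ 2 + f.b ^ 2) * g.c| ≤ K := by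
    refine (abs_add_le _ _).trans (add_le_add ?_ ?_)
    · rw [abs_mul]
      gcongr
      exact (abs_sub _ _).trans (by linarith [hM p hp])
    · rw [abs_mul, abs_of_pos f.sq_add_sq_pos]
  have hbig : K < |f.cross g * f.along p| := by
    rw [abs_mul]
    calc K = |f.cross g| * (K / |f.cross g|) := by field_simp
      _ < |f.cross g| * |f.along p| := by gcongr; linarith
  have hD := f.sq_add_sq_mul_eval g p
  set x := f.cross g * f.along p
  set E := (g.a * f.a + g.b * f.b) * (f.eval p - f.c) + (f.a ^ 2 + f.b ^ 2) * g.c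
  have hxE : 0 < x * ((f.a ^ 2 + f.b ^ 2) * g.eval p) := by
    have h₁ : 0 < |x| * (|x| - |E|) := mul_pos (by linarith [abs_nonneg E]) (by linarith)
    have h₂ : -(|x| * |E|) ≤ x * E := by rw [← abs_mul]; exact neg_abs_le _
    rw [hD]
    nlinarith [abs_mul_abs_self x]
  exact (pos_iff_pos_of_mul_pos (by linear_combination hxE :
    0 < (f.a ^ 2 + f.b ^ 2) * (x * g.eval p))).mp f.sq_add_sq_pos

lemma exists_lt_abs_along_of_not_isBounded (f : AffForm) {S U : Set Pt} {M : ℝ}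
    (hM : ∀ p ∈ S, |f.eval p| ≤ M) (hUS : U ⊆ S) (hU : ¬ Bornology.IsBounded U) (T : ℝ) :
    ∃ p ∈ U, T < |f.along p| := by
  by_contra! h
  apply hU
  have hD : f.a ^ 2 + f.b ^ 2 ≠ 0 := f.sq_add_sq_pos.ne'
  let φ : ℝ × ℝ → Pt := fun x => ((f.a * (x.1 - f.c) + f.b * x.2) / (f.a ^ 2 + f.b ^ 2),
    (f.b * (x.1 - f.c) - f.a * x.2) / (f.a ^ 2 + f.b ^ 2))
  refine (((isCompact_Icc.prod isCompact_Icc).image (by fun_prop : Continuous φ)).isBounded).subset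
    fun p hp => ⟨(f.eval p, f.along p), ⟨abs_le.mp (hM p (hUS hp)), abs_le.mp (h p hp)⟩, ?_⟩
  ext <;> simp only [φ, eval, along] <;> field_simp <;> ring

end AffForm

lemma IsPreconnected.pos_iff_pos_of_ne_zero {X : Type*} [TopologicalSpace X] {S : Set X}
    (hS : IsPreconnected S) {g : X → ℝ} (hg : ContinuousOn g S) (h0 : ∀ p ∈ S, g p ≠ 0)
    {x y : X} (hx : x ∈ S) (hy : y ∈ S) : 0 < g x ↔ 0 < g y := by
  have key : ∀ {x y}, x ∈ S → y ∈ S → 0 < g x → 0 < g y := fun {x y} hx hy hgx => by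
    by_contra! hgy
    obtain ⟨z, hz, hz0⟩ := hS.intermediate_value hy hx hg ⟨hgy, hgx.le⟩
    exact h0 z hz hz0
  exact ⟨key hx hy, key hy hx⟩

lemma mul_pos_of_pos_iff_pos {a b : ℝ} (ha : a ≠ 0) (hb : b ≠ 0) (h : 0 < a ↔ 0 < b) :
    0 < a * b := by
  rcases ha.lt_or_gt with ha | ha
  · exact mul_pos_of_neg_of_neg ha (hb.lt_of_le (not_lt.mp (h.not.mp ha.not_gt)))
  · exact mul_pos ha (h.mp ha)

namespace IsChamber

variable {α : Fin n → AffForm} {C C' : Set Pt}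

lemma eq_connectedComponentIn (hC : IsChamber α C) {x : Pt} (hx : x ∈ C) :
    C = connectedComponentIn (complement α) x := by
  obtain ⟨p, -, rfl⟩ := hC
  exact connectedComponentIn_eq hx

lemma subset_complement (hC : IsChamber α C) : C ⊆ complement α := by
  obtain ⟨p, -, rfl⟩ := hC
  exact connectedComponentIn_subset _ _

lemma nonempty (hC : IsChamber α C) : C.Nonempty := by
  obtain ⟨p, hp, rfl⟩ := hC
  exact ⟨p, mem_connectedComponentIn hp⟩

lemma isPreconnected (hC : IsChamber α C) : IsPreconnected C := by
  obtain ⟨p, -, rfl⟩ := hC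
  exact isPreconnected_connectedComponentIn

lemma pos_iff_pos (hC : IsChamber α C) (k : Fin n) {x y : Pt} (hx : x ∈ C) (hy : y ∈ C) :
    0 < (α k).eval x ↔ 0 < (α k).eval y :=
  hC.isPreconnected.pos_iff_pos_of_ne_zero (α k).continuous_eval.continuousOn
    (fun _ hq => hC.subset_complement hq k) hx hy

lemma eq_of_isPreconnected (hC : IsChamber α C) (hC' : IsChamber α C') {W : Set Pt}
    (hW : IsPreconnected W) (hWα : W ⊆ complement α) {x y : Pt} (hxC : x ∈ C) (hxW : x ∈ W)
    (hyC' : y ∈ C') (hyW : y ∈ W) : C = C' := by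
  have hy : y ∈ connectedComponentIn (complement α) x :=
    hW.subset_connectedComponentIn hxW hWα hyW
  rw [hC.eq_connectedComponentIn hxC, hC'.eq_connectedComponentIn hyC', connectedComponentIn_eq hy]

lemma mem_sepSet_iff (hC : IsChamber α C) (hC' : IsChamber α C') {x y : Pt} (hx : x ∈ C)
    (hy : y ∈ C') (k : Fin n) :
    k ∈ SepSet α C C' ↔ ¬ (0 < (α k).eval x ↔ 0 < (α k).eval y) := by
  have hneg : ∀ {D : Set Pt} {z : Pt}, IsChamber α D → z ∈ D →
      ((∀ p ∈ D, (α k).eval p < 0) ↔ ¬ 0 < (α k).eval z) := fun {D z} hD hz =>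
    ⟨fun h => (h z hz).not_gt, fun h p hp => lt_of_le_of_ne
      (not_lt.mp ((hD.pos_iff_pos k hp hz).not.mpr h)) (hD.subset_complement hp k)⟩
  have hpos : ∀ {D : Set Pt} {z : Pt}, IsChamber α D → z ∈ D →
      ((∀ p ∈ D, 0 < (α k).eval p) ↔ 0 < (α k).eval z) := fun {D z} hD hz =>
    ⟨fun h => h z hz, fun h p hp => (hD.pos_iff_pos k hp hz).mpr h⟩
  simp only [SepSet, Finset.mem_filter, Finset.mem_univ, true_and, hpos hC hx, hpos hC' hy,
    hneg hC hx, hneg hC' hy]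
  tauto

end IsChamber

namespace BandData

variable {α : Fin n → AffForm} {i j : Fin n} {B U1 U2 : Set Pt}

lemma convex (hB : BandData α i j B U1 U2) : Convex ℝ B := by
  rw [hB.2.2.1]; exact AffForm.convex_strip _ _

lemma exists_abs_eval_le (hB : BandData α i j B U1 U2) : ∃ M, ∀ p ∈ B, |(α i).eval p| ≤ M := by
  rw [hB.2.2.1]; exact AffForm.exists_abs_eval_le_of_mem_strip _ _

lemma pos_iff_pos_of_parallel (hB : BandData α i j B U1 U2) {k : Fin n}
    (hk : (α k).Parallel (α i)) {x y : Pt} (hx : x ∈ B) (hy : y ∈ B) :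
    0 < (α k).eval x ↔ 0 < (α k).eval y :=
  hB.convex.isPreconnected.pos_iff_pos_of_ne_zero (α k).continuous_eval.continuousOn
    (fun p hp h0 => (Set.eq_empty_iff_forall_notMem.mp (hB.2.2.2.1 k hk)) p ⟨h0, hp⟩) hx hy

lemma eventually_subset_complement (hB : BandData α i j B U1 U2) :
    ∀ᶠ T in Filter.atTop, B ∩ {p | T < |(α i).along p|} ⊆ complement α := by
  obtain ⟨M, hM⟩ := hB.exists_abs_eval_le
  have hk : ∀ k, ∀ᶠ T in Filter.atTop, ∀ p ∈ B, T < |(α i).along p| → (α k).eval p ≠ 0 := by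
    intro k
    by_cases hki : (α k).Parallel (α i)
    · refine Filter.Eventually.of_forall fun _ p hp _ h0 => ?_
      exact (Set.eq_empty_iff_forall_notMem.mp (hB.2.2.2.1 k hki)) p ⟨h0, hp⟩
    · filter_upwards [AffForm.eventually_pos_cross_mul_along_mul_eval hki hM] with T hT p hp hTp
      exact right_ne_zero_of_mul (hT p hp hTp).ne'
  filter_upwards [Filter.eventually_all.mpr hk] with T hT p hp k
  exact hT k p hp.1 hp.2

lemma not_pos_iff_pos_of_not_parallel (hB : BandData α i j B U1 U2) {k : Fin n}
    (hk : ¬ (α k).Parallel (α i)) {x₁ x₂ : Pt} (hx₁ : x₁ ∈ U1) (hx₂ : x₂ ∈ U2) :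
    ¬ (0 < (α k).eval x₁ ↔ 0 < (α k).eval x₂) := by
  obtain ⟨M, hM⟩ := hB.exists_abs_eval_le
  obtain ⟨T, hTα, hTk⟩ := (hB.eventually_subset_complement.and
    (AffForm.eventually_pos_cross_mul_along_mul_eval hk hM)).exists
  have ⟨_, _, _, _, hU1, hU2, hU1B, hU2B, hU1b, hU2b, hU12⟩ := hB
  intro hsame
  obtain ⟨p₁, hp₁, hTp₁⟩ := (α i).exists_lt_abs_along_of_not_isBounded hM hU1B hU1b T
  obtain ⟨p₂, hp₂, hTp₂⟩ := (α i).exists_lt_abs_along_of_not_isBounded hM hU2B hU2b T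
  have halfBand : ∀ σ : ℝ, |σ| = 1 → T < σ * (α i).along p₁ → T < σ * (α i).along p₂ → False :=
    fun σ hσ h₁ h₂ => hU12 <| hU1.eq_of_isPreconnected hU2
      (hB.convex.inter ((α i).convex_halfPlane_along σ T)).isPreconnected
      (fun p hp => hTα ⟨hp.1, hp.2.trans_le <| by
        simpa only [abs_mul, hσ, one_mul] using le_abs_self (σ * (α i).along p)⟩)
      hp₁ ⟨hU1B hp₁, h₁⟩ hp₂ ⟨hU2B hp₂, h₂⟩
  have hsame' : 0 < (α k).eval p₁ ↔ 0 < (α k).eval p₂ := by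
    rw [hU1.pos_iff_pos k hp₁ hx₁, hU2.pos_iff_pos k hp₂ hx₂]; exact hsame
  have hkk := mul_pos_of_pos_iff_pos (hU1.subset_complement hp₁ k) (hU2.subset_complement hp₂ k)
    hsame'
  have hss : 0 < (α i).along p₁ * (α i).along p₂ := by
    have h := mul_pos (hTk p₁ (hU1B hp₁) hTp₁) (hTk p₂ (hU2B hp₂) hTp₂)
    have hcr := pow_pos (abs_pos.mpr (AffForm.cross_ne_zero hk)) 2
    rw [sq_abs] at hcr
    refine (pos_iff_pos_of_mul_pos (b := (α i).cross (α k) ^ 2 * ((α k).eval p₁ * (α k).eval p₂))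
      ?_).mpr (mul_pos hcr hkk)
    linear_combination h
  rcases pos_and_pos_or_neg_and_neg_of_mul_pos hss with ⟨hs₁, hs₂⟩ | ⟨hs₁, hs₂⟩
  · rw [abs_of_pos hs₁] at hTp₁
    rw [abs_of_pos hs₂] at hTp₂
    exact halfBand 1 (by norm_num) (by linarith) (by linarith)
  · rw [abs_of_neg hs₁] at hTp₁
    rw [abs_of_neg hs₂] at hTp₂
    exact halfBand (-1) (by norm_num) (by linarith) (by linarith)

lemma prod_sepSet (hB : BandData α i j B U1 U2) {C : Set Pt} (hC : IsChamber α C) (hCB : C ⊆ B)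
    {M : Type*} [CommMonoid M] (r : Fin n → M) :
    ∏ k ∈ SepSet α U1 U2, r k = (∏ k ∈ SepSet α U1 C, r k) * ∏ k ∈ SepSet α U2 C, r k := by
  have ⟨_, _, _, _, hU1, hU2, hU1B, hU2B, _⟩ := hB
  obtain ⟨x₁, hx₁⟩ := hU1.nonempty
  obtain ⟨x₂, hx₂⟩ := hU2.nonempty
  obtain ⟨c, hc⟩ := hC.nonempty
  have hsides : ∀ k, ((0 < (α k).eval x₁ ↔ 0 < (α k).eval c) ∧
      (0 < (α k).eval x₂ ↔ 0 < (α k).eval c)) ∨ ¬ (0 < (α k).eval x₁ ↔ 0 < (α k).eval x₂) := by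
    intro k
    by_cases hk : (α k).Parallel (α i)
    · exact Or.inl ⟨hB.pos_iff_pos_of_parallel hk (hU1B hx₁) (hCB hc),
        hB.pos_iff_pos_of_parallel hk (hU2B hx₂) (hCB hc)⟩
    · exact Or.inr (hB.not_pos_iff_pos_of_not_parallel hk hx₁ hx₂)
  rw [← Finset.prod_union]
  · congr 1
    ext k
    rw [Finset.mem_union, hU1.mem_sepSet_iff hU2 hx₁ hx₂, hU1.mem_sepSet_iff hC hx₁ hc,
      hU2.mem_sepSet_iff hC hx₂ hc]
    have := hsides k
    tauto
  · rw [Finset.disjoint_left]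
    intro k hk₁ hk₂
    rw [hU1.mem_sepSet_iff hC hx₁ hc] at hk₁
    rw [hU2.mem_sepSet_iff hC hx₂ hc] at hk₂
    have := hsides k
    tauto

end BandData

lemma Delta_eq_sub_inv (α : Fin n → AffForm) (r : Fin n → ℂ) (C C' : Set Pt) :
    Delta α r C C' = (∏ k ∈ SepSet α C C', r k) - (∏ k ∈ SepSet α C C', r k)⁻¹ := by
  rw [Delta, Finset.prod_inv_distrib]

lemma sub_inv_eq_neg_mul_mul_sub_inv {K : Type*} [Field K] {x y : K} (hx : x ≠ 0) (hy : y ≠ 0)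
    (hxy : x * y * (x * y) = 1) : x - x⁻¹ = -(x * y) * (y - y⁻¹) := by
  field_simp
  linear_combination hxy

lemma wave_eq_smul_of_forall {α : Fin n → AffForm} {chambers : Finset (Set Pt)}
    {r : Fin n → ℂ} {U U' B : Set Pt} {c : ℂ}
    (h : ∀ C ∈ chambers, C ⊆ B → Delta α r U C = c * Delta α r U' C) :
    wave α chambers r U B = c • wave α chambers r U' B := by
  rw [wave, wave, Finset.smul_sum]
  refine Finset.sum_congr rfl fun C hC => ?_
  rw [Finset.mem_filter] at hC
  rw [h C hC.1 hC.2, Finsupp.smul_single, smul_eq_mul]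

theorem statement3_general {n : ℕ} (α : Fin n → AffForm)
    (r : Fin n → ℂ) (hr0 : ∀ i, r i ≠ 0)
    (chambers : Finset (Set Pt)) (hch : ∀ C : Set Pt, C ∈ chambers ↔ IsChamber α C)
    (i j : Fin n) (B U1 U2 : Set Pt) (hB : BandData α i j B U1 U2)
    (hres : Delta α r U1 U2 = 0)
    (δ : ℂ) (hδ : δ = ∏ k ∈ SepSet α U1 U2, r k) :
    (δ = 1 ∨ δ = -1) ∧
    (∀ C : Set Pt, IsChamber α C → C ⊆ B →
      Delta α r U1 C = -δ * Delta α r U2 C) ∧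
    wave α chambers r U1 B = (-δ) • wave α chambers r U2 B ∧
    (wave α chambers r U2 B = wave α chambers r U1 B ∨
      wave α chambers r U2 B = -wave α chambers r U1 B) := by
  have hprod_ne : ∀ s : Finset (Fin n), ∏ k ∈ s, r k ≠ 0 := fun s =>
    Finset.prod_ne_zero_iff.mpr fun k _ => hr0 k
  have hδδ : δ * δ = 1 := by
    rw [Delta_eq_sub_inv, ← hδ, sub_eq_zero] at hres
    nth_rw 2 [hres]
    exact mul_inv_cancel₀ (hδ ▸ hprod_ne _)
  have hδ1 : δ = 1 ∨ δ = -1 := mul_self_eq_one_iff.mp hδδ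
  have hDelta : ∀ C : Set Pt, IsChamber α C → C ⊆ B → Delta α r U1 C = -δ * Delta α r U2 C := by
    intro C hC hCB
    rw [hδ, hB.prod_sepSet hC hCB] at hδδ ⊢
    rw [Delta_eq_sub_inv, Delta_eq_sub_inv]
    exact sub_inv_eq_neg_mul_mul_sub_inv (hprod_ne _) (hprod_ne _) hδδ
  have hwave := wave_eq_smul_of_forall fun C hC hCB => hDelta C ((hch C).mp hC) hCB
  refine ⟨hδ1, hDelta, hwave, ?_⟩
  rcases hδ1 with rfl | rfl
  · right; rw [hwave]; simp
  · left; rw [hwave]; simp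

/-- Let `B` be a resonant band of `A` and set
`δ := ∏_{k ∈ Sep(U_1(B), U_2(B))} r k`. Then `δ = 1` or `δ = −1`; for every chamber
`C ⊆ B` one has `Δ(U_1(B), C) = −δ·Δ(U_2(B), C)`; and consequently
`∇_1(B) = −δ·∇_2(B)`; in particular `∇_2(B) = ±∇_1(B)`. -/
theorem statement3 {n : ℕ} (α : Fin n → AffForm) (hA : IsArrangement α)
    (q r : Fin n → ℂ) (hq : ∀ i, q i ≠ 0) (hr0 : ∀ i, r i ≠ 0) (hrq : ∀ i, r i ^ 2 = q i)
    (chambers : Finset (Set Pt)) (hch : ∀ C : Set Pt, C ∈ chambers ↔ IsChamber α C)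
    (i j : Fin n) (B U1 U2 : Set Pt) (hB : BandData α i j B U1 U2)
    (hres : Delta α r U1 U2 = 0)
    (δ : ℂ) (hδ : δ = ∏ k ∈ SepSet α U1 U2, r k) :
    (δ = 1 ∨ δ = -1) ∧
    (∀ C : Set Pt, IsChamber α C → C ⊆ B →
      Delta α r U1 C = -δ * Delta α r U2 C) ∧
    wave α chambers r U1 B = (-δ) • wave α chambers r U2 B ∧
    (wave α chambers r U2 B = wave α chambers r U1 B ∨
      wave α chambers r U2 B = -wave α chambers r U1 B) :=
  statement3_general α r hr0 chambers hch i j B U1 U2 hB hres δ hδ
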